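/- Let X(x) = (1/|x-a|² - 1/ρ²)(x-a) on σ < |x-a| ≤ ρ ⊂ ℝ³, and let ν be a unit vector. Then the tangential divergence div_Σ X := div X - ⟨∇X[ν], ν⟩ equals -2/ρ² + 2|(x-a)^⊥/|x-a|²|², where (x-a)^⊥ = ⟨x-a, ν⟩ν. -/

import Mathlib

/-!
With `w = x - a`, `r = ‖w‖` and `c = 1/r² - 1/ρ²`, the Jacobian of `X` at `x` is the scalar
`c` plus the rank-one map `-(2/r⁴) w ⊗ w`. Its trace is `3c - 2/r²` and its normal component
is `⟨∇X[ν], ν⟩ = c - 2⟨w, ν⟩²/r⁴`, so the tangential divergence is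
`2c - 2/r² + 2⟨w, ν⟩²/r⁴ = -2/ρ² + 2⟨w, ν⟩²/r⁴`.
-/

noncomputable section

abbrev E3 := EuclideanSpace ℝ (Fin 3)

/-- The full divergence of a vector field `X : ℝ³ → ℝ³`. -/
def div3 (X : E3 → E3) (x : E3) : ℝ :=
  ∑ i, fderiv ℝ X x (EuclideanSpace.single i 1) i

open InnerProductSpace

theorem hasFDerivAt_inv_norm_sq_sub_smul_sub {E : Type*} [NormedAddCommGroup E]
    [InnerProductSpace ℝ E] {a x : E} (hx : x ≠ a) (k : ℝ) :
    HasFDerivAt (fun y => (1 / ‖y - a‖ ^ 2 - k) • (y - a))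
      ((1 / ‖x - a‖ ^ 2 - k) • ContinuousLinearMap.id ℝ E
        - (2 / ‖x - a‖ ^ 4) • rankOne ℝ (x - a) (x - a)) x := by
  have hr : ‖x - a‖ ^ 2 ≠ 0 := by simpa [sub_eq_zero] using hx
  have hsub : HasFDerivAt (fun y => y - a) (ContinuousLinearMap.id ℝ E) x :=
    (hasFDerivAt_id x).sub_const a
  have hcoef := ((hasDerivAt_inv hr).comp_hasFDerivAt x hsub.norm_sq).sub_const k
  simp only [Function.comp_def, ← one_div] at hcoef
  refine (hcoef.smul hsub).congr_fderiv ?_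
  ext v
  simp
  module

theorem EuclideanSpace.trace_eq_sum_single_apply {n : ℕ}
    (T : EuclideanSpace ℝ (Fin n) →L[ℝ] EuclideanSpace ℝ (Fin n)) :
    (T : EuclideanSpace ℝ (Fin n) →ₗ[ℝ] _).trace ℝ _ = ∑ i, T (EuclideanSpace.single i 1) i := by
  rw [LinearMap.trace_eq_sum_inner _ (EuclideanSpace.basisFun (Fin n) ℝ)]
  simp [EuclideanSpace.inner_single_left]

section ScalarMinusRankOne

variable {E : Type*} [NormedAddCommGroup E] [InnerProductSpace ℝ E] (c d : ℝ) (u w : E)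

theorem trace_smul_id_sub_smul_rankOne [FiniteDimensional ℝ E] :
    ((c • ContinuousLinearMap.id ℝ E - d • rankOne ℝ u w : E →L[ℝ] E) : E →ₗ[ℝ] E).trace ℝ E
      = Module.finrank ℝ E * c - d * ⟪w, u⟫_ℝ := by
  simp [LinearMap.trace_id, InnerProductSpace.trace_rankOne, mul_comm]

theorem inner_smul_id_sub_smul_rankOne_apply_of_norm_eq_one {ν : E} (hν : ‖ν‖ = 1) :
    ⟪(c • ContinuousLinearMap.id ℝ E - d • rankOne ℝ u w) ν, ν⟫_ℝ
      = c - d * ⟪w, ν⟫_ℝ * ⟪u, ν⟫_ℝ := by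
  simp [inner_sub_left, real_inner_smul_left, hν, mul_assoc]

end ScalarMinusRankOne

theorem tangential_div_annulus_field_general (a : E3) (σ ρ : ℝ) (hσ : 0 < σ)
    (ν : E3) (hν : ‖ν‖ = 1)
    (X : E3 → E3) (hX : ∀ y, X y = (1 / ‖y - a‖ ^ 2 - 1 / ρ ^ 2) • (y - a)) :
    ∀ x : E3, σ < ‖x - a‖ → ‖x - a‖ ≤ ρ →
      div3 X x - (inner ℝ (fderiv ℝ X x ν) ν : ℝ)
        = -2 / ρ ^ 2 + 2 * ‖((inner ℝ (x - a) ν : ℝ) / ‖x - a‖ ^ 2) • ν‖ ^ 2 := by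
  intro x hσx _
  have hr : ‖x - a‖ ≠ 0 := (hσ.trans hσx).ne'
  have hx : x ≠ a := by simpa [sub_eq_zero] using hr
  have hX' : fderiv ℝ X x = _ :=
    (funext hX ▸ hasFDerivAt_inv_norm_sq_sub_smul_sub hx (1 / ρ ^ 2)).fderiv
  rw [div3, ← EuclideanSpace.trace_eq_sum_single_apply, hX', trace_smul_id_sub_smul_rankOne,
    inner_smul_id_sub_smul_rankOne_apply_of_norm_eq_one _ _ _ _ hν, norm_smul, hν, mul_one,
    Real.norm_eq_abs, sq_abs, real_inner_self_eq_norm_sq, finrank_euclideanSpace_fin]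
  field_simp
  ring

/-- For `X(x) = (1/|x-a|² - 1/ρ²)(x-a)` on `σ < |x-a| ≤ ρ` and a unit vector `ν`, the
tangential divergence `div X - ⟨∇X[ν], ν⟩` equals `-2/ρ² + 2|(x-a)^⊥/|x-a|²|²`,
where `(x-a)^⊥ = ⟨x-a, ν⟩ν`. -/
theorem tangential_div_annulus_field (a : E3) (σ ρ : ℝ) (hσ : 0 < σ) (hσρ : σ < ρ)
    (ν : E3) (hν : ‖ν‖ = 1)
    (X : E3 → E3) (hX : ∀ y, X y = (1 / ‖y - a‖ ^ 2 - 1 / ρ ^ 2) • (y - a)) :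
    ∀ x : E3, σ < ‖x - a‖ → ‖x - a‖ ≤ ρ →
      div3 X x - (inner ℝ (fderiv ℝ X x ν) ν : ℝ)
        = -2 / ρ ^ 2 + 2 * ‖((inner ℝ (x - a) ν : ℝ) / ‖x - a‖ ^ 2) • ν‖ ^ 2 :=
  tangential_div_annulus_field_general a σ ρ hσ ν hν X hX
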